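/- Let n ≥ 1, W a linear subspace of ℝⁿ, d, c ∈ ℝⁿ, P = {x ∈ ℝⁿ : x ∈ W + d, x ≥ 0}, D = {s ∈ ℝⁿ : s ∈ W⊥ + c, s ≥ 0}. Assume x⋆ ∈ P, s⋆ ∈ D with ⟨x⋆, s⋆⟩ = 0, and that there exists s° ∈ D with s° > 0 entrywise, so that x^m_i(g) = sup{x_i : x ∈ P, ⟨x, s⋆⟩ ≤ g} is finite for all g ≥ 0. Then for every i ∈ [n], every g ≥ 0 and every real α ≥ 1: x^m_i(α·g) ≤ α·x^m_i(g) and x^m_i(g/α) ≥ x^m_i(g)/α. -/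

import Mathlib

open scoped RealInnerProductSpace

/-- The `i`-th coordinate `x^m_i(g)` of the primal max central path:
the supremum of `x i` over primal feasible points `x` with optimality gap at most `g`. -/
noncomputable def primalMCP (n : ℕ) (W : Submodule ℝ (EuclideanSpace ℝ (Fin n)))
    (d sstar : EuclideanSpace ℝ (Fin n)) (g : ℝ) (i : Fin n) : ℝ :=
  sSup {t : ℝ | ∃ x : EuclideanSpace ℝ (Fin n),
    x - d ∈ W ∧ (∀ j, 0 ≤ x j) ∧ ⟪x, sstar⟫ ≤ g ∧ t = x i}

/-!
If `x` is primal feasible with `⟪x, s⋆⟫ ≤ g`, then `y = α⁻¹ x + (1 - α⁻¹) x⋆` is primal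
feasible with `⟪y, s⋆⟫ ≤ g / α`, because `⟪x⋆, s⋆⟫ = 0`; since `x⋆ ≥ 0` this gives `x_i ≤ α y_i`,
hence `x^m_i(g) ≤ α x^m_i(g / α)`. Both inequalities are instances of this one. The suprema are finite
because `⟪x, s°⟫ - ⟪x, s⋆⟫` is constant on `W + d` and `s° > 0`.
-/

section PrimalLevel

variable {ι : Type*} [Fintype ι]

def primalLevel (W : Submodule ℝ (EuclideanSpace ℝ ι)) (d s : EuclideanSpace ℝ ι) (g : ℝ) :
    Set (EuclideanSpace ℝ ι) :=
  {x | x - d ∈ W ∧ (∀ j, 0 ≤ x j) ∧ ⟪x, s⟫ ≤ g}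

variable {W : Submodule ℝ (EuclideanSpace ℝ ι)} {d s : EuclideanSpace ℝ ι}

theorem primalLevel_mono {g h : ℝ} (hgh : g ≤ h) : primalLevel W d s g ⊆ primalLevel W d s h :=
  fun _ ⟨hxW, hxpos, hxgap⟩ => ⟨hxW, hxpos, hxgap.trans hgh⟩

theorem smul_add_one_sub_smul_mem_primalLevel {x y : EuclideanSpace ℝ ι} {g h t : ℝ}
    (hx : x ∈ primalLevel W d s g) (hy : y ∈ primalLevel W d s h) (ht₀ : 0 ≤ t) (ht₁ : t ≤ 1) :
    t • x + (1 - t) • y ∈ primalLevel W d s (t * g + (1 - t) * h) := by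
  obtain ⟨hxW, hxpos, hxgap⟩ := hx
  obtain ⟨hyW, hypos, hygap⟩ := hy
  have ht₁' : 0 ≤ 1 - t := sub_nonneg.mpr ht₁
  refine ⟨?_, fun j => ?_, ?_⟩
  · have hsplit : t • x + (1 - t) • y - d = t • (x - d) + (1 - t) • (y - d) := by module
    rw [hsplit]
    exact add_mem (W.smul_mem _ hxW) (W.smul_mem _ hyW)
  · simp only [PiLp.add_apply, PiLp.smul_apply, smul_eq_mul]
    exact add_nonneg (mul_nonneg ht₀ (hxpos j)) (mul_nonneg ht₁' (hypos j))
  · rw [inner_add_left, real_inner_smul_left, real_inner_smul_left]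
    exact add_le_add (mul_le_mul_of_nonneg_left hxgap ht₀) (mul_le_mul_of_nonneg_left hygap ht₁')

theorem inner_sub_inner_eq_of_mem {x s' : EuclideanSpace ℝ ι} (hx : x - d ∈ W)
    (hs : s' - s ∈ Wᗮ) : ⟪x, s'⟫ - ⟪x, s⟫ = ⟪d, s'⟫ - ⟪d, s⟫ := by
  have horth : ⟪x - d, s' - s⟫ = 0 := Submodule.inner_right_of_mem_orthogonal hx hs
  rw [inner_sub_left, inner_sub_right, inner_sub_right] at horth
  linarith

theorem coord_mul_le_inner {x s' : EuclideanSpace ℝ ι} (hx : ∀ j, 0 ≤ x j) (hs' : ∀ j, 0 ≤ s' j)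
    (i : ι) : x i * s' i ≤ ⟪x, s'⟫ := by
  rw [PiLp.inner_apply]
  simp only [RCLike.inner_apply, conj_trivial]
  rw [mul_comm]
  exact Finset.single_le_sum (f := fun j => s' j * x j)
    (fun j _ => mul_nonneg (hs' j) (hx j)) (Finset.mem_univ i)

theorem bddAbove_coord_primalLevel {s' : EuclideanSpace ℝ ι} (hs : s' - s ∈ Wᗮ)
    (hs'pos : ∀ j, 0 < s' j) (g : ℝ) (i : ι) : BddAbove ((· i) '' primalLevel W d s g) := by
  refine ⟨(g + (⟪d, s'⟫ - ⟪d, s⟫)) / s' i, ?_⟩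
  rintro _ ⟨x, ⟨hxW, hxpos, hxgap⟩, rfl⟩
  rw [le_div_iff₀ (hs'pos i)]
  have := inner_sub_inner_eq_of_mem hxW hs
  linarith [coord_mul_le_inner hxpos (fun j => (hs'pos j).le) i]

theorem sSup_coord_primalLevel_le_mul {xstar : EuclideanSpace ℝ ι}
    (hxstar : xstar ∈ primalLevel W d s 0) (i : ι)
    (hbdd : ∀ g, BddAbove ((· i) '' primalLevel W d s g)) {g α : ℝ} (hg : 0 ≤ g) (hα : 1 ≤ α) :
    sSup ((· i) '' primalLevel W d s g) ≤ α * sSup ((· i) '' primalLevel W d s (g / α)) := by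
  have hα₀ : 0 < α := one_pos.trans_le hα
  have hne : ((· i) '' primalLevel W d s g).Nonempty :=
    ⟨xstar i, xstar, primalLevel_mono hg hxstar, rfl⟩
  refine csSup_le hne ?_
  rintro _ ⟨x, hx, rfl⟩
  have hy := smul_add_one_sub_smul_mem_primalLevel hx hxstar (inv_nonneg.mpr hα₀.le) (inv_le_one_of_one_le₀ hα)
  rw [mul_zero, add_zero, ← div_eq_inv_mul] at hy
  have hyle := le_csSup (hbdd (g / α)) ⟨_, hy, rfl⟩
  simp only [PiLp.add_apply, PiLp.smul_apply, smul_eq_mul] at hyle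
  have hαy : α * (α⁻¹ * x i + (1 - α⁻¹) * xstar i) = x i + (α - 1) * xstar i := by
    field_simp
  nlinarith [hxstar.2.1 i]

end PrimalLevel

theorem primalMCP_eq_sSup (n : ℕ) (W : Submodule ℝ (EuclideanSpace ℝ (Fin n)))
    (d s : EuclideanSpace ℝ (Fin n)) (g : ℝ) (i : Fin n) :
    primalMCP n W d s g i = sSup ((· i) '' primalLevel W d s g) := by
  simp only [primalMCP, primalLevel, Set.image, Set.mem_ofPred_eq, eq_comm, and_assoc]

theorem statement13_general (n : ℕ)
    (W : Submodule ℝ (EuclideanSpace ℝ (Fin n)))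
    (d c xstar sstar : EuclideanSpace ℝ (Fin n))
    (hxstarW : xstar - d ∈ W) (hxstarpos : ∀ i, 0 ≤ xstar i)
    (hsstarW : sstar - c ∈ Wᗮ)
    (hopt : ⟪xstar, sstar⟫ = 0)
    (s₀ : EuclideanSpace ℝ (Fin n)) (hs₀W : s₀ - c ∈ Wᗮ) (hs₀pos : ∀ i, 0 < s₀ i) :
    ∀ i : Fin n, ∀ g α : ℝ, 0 ≤ g → 1 ≤ α →
      primalMCP n W d sstar (α * g) i ≤ α * primalMCP n W d sstar g i ∧
      primalMCP n W d sstar g i / α ≤ primalMCP n W d sstar (g / α) i := by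
  intro i g α hg hα
  have hα₀ : 0 < α := one_pos.trans_le hα
  have hxstar : xstar ∈ primalLevel W d sstar 0 := ⟨hxstarW, hxstarpos, hopt.le⟩
  have hs₀sstar : s₀ - sstar ∈ Wᗮ := by simpa using sub_mem hs₀W hsstarW
  have hbdd := fun g => bddAbove_coord_primalLevel (d := d) hs₀sstar hs₀pos g i
  have key := fun {g : ℝ} (hg : 0 ≤ g) => sSup_coord_primalLevel_le_mul hxstar i hbdd (g := g) hg hα
  simp only [primalMCP_eq_sSup]
  refine ⟨?_, (div_le_iff₀ hα₀).mpr ?_⟩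
  · simpa [hα₀.ne'] using key (mul_nonneg hα₀.le hg)
  · simpa [mul_comm] using key hg

theorem statement13 (n : ℕ) (hn : 1 ≤ n)
    (W : Submodule ℝ (EuclideanSpace ℝ (Fin n)))
    (d c xstar sstar : EuclideanSpace ℝ (Fin n))
    (hxstarW : xstar - d ∈ W) (hxstarpos : ∀ i, 0 ≤ xstar i)
    (hsstarW : sstar - c ∈ Wᗮ) (hsstarpos : ∀ i, 0 ≤ sstar i)
    (hopt : ⟪xstar, sstar⟫ = 0)
    (s₀ : EuclideanSpace ℝ (Fin n)) (hs₀W : s₀ - c ∈ Wᗮ) (hs₀pos : ∀ i, 0 < s₀ i) :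
    ∀ i : Fin n, ∀ g α : ℝ, 0 ≤ g → 1 ≤ α →
      primalMCP n W d sstar (α * g) i ≤ α * primalMCP n W d sstar g i ∧
      primalMCP n W d sstar g i / α ≤ primalMCP n W d sstar (g / α) i :=
  statement13_general n W d c xstar sstar hxstarW hxstarpos hsstarW hopt s₀ hs₀W hs₀pos
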